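/- arXiv:2408.01365 — 4 statements merged into one kernel-verified Lean document; each statement's English description precedes it below -/
import Mathlib

section
/- For the linear loss, there exists a sub-multiset T' ⊆ T with y_test·⟨w*(T'), x_test⟩ ≥ 0 if and only if y_test·⟨w*(T*), x_test⟩ ≥ 0, where T* := {(x,y) ∈ T : y_test·α·y·⟨η⊗x, x_test⟩ > 0} is the sub-multiset of 'good' samples. (This is the correctness of the greedy Good Training-sample Assessment algorithm for linear loss.) -/
open Classical

/-- One SGD update for the linear loss `L(s) = -α (s + β)` with learning-rate vector `η`:
`w ↦ w + α y (η ⊗ x)`. -/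
noncomputable def linStep (d : ℕ) (α : ℝ) (η : Fin d → ℝ)
    (w : Fin d → ℝ) (p : (Fin d → ℝ) × ℝ) : Fin d → ℝ :=
  fun i => w i + α * p.2 * (η i * p.1 i)

/-- `w*(T') = w⁰ + Σ_{(x,y) ∈ T'} α y (η ⊗ x)`. -/
noncomputable def wStar (d : ℕ) (α : ℝ) (η w0 : Fin d → ℝ)
    (T : Multiset ((Fin d → ℝ) × ℝ)) : Fin d → ℝ :=
  fun i => w0 i + (T.map (fun p => α * p.2 * (η i * p.1 i))).sum

/-- Dot product on `ℝ^d`. -/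
noncomputable def dotP (d : ℕ) (a b : Fin d → ℝ) : ℝ := ∑ i, a i * b i

/-!
The test margin `y_test ⟨w*(S), x_test⟩` is affine in the multiset `S`: it equals
`y_test ⟨w⁰, x_test⟩` plus the sum over `S` of the gains `y_test α y ⟨η ⊗ x, x_test⟩`.
Over the sub-multisets of `T` such a sum is maximised by keeping exactly the samples of positive
gain, i.e. by `T*`.
-/

namespace Multiset

variable {ι M : Type*} [AddCommMonoid M] [LinearOrder M] [IsOrderedAddMonoid M]

theorem sum_map_le_sum_map_of_le_of_nonneg {s t : Multiset ι} (hst : s ≤ t) {g : ι → M}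
    (hg : ∀ i ∈ t, 0 ≤ g i) : (s.map g).sum ≤ (t.map g).sum := by
  obtain ⟨u, rfl⟩ := exists_add_of_le hst
  rw [map_add, sum_add]
  exact le_add_of_nonneg_right <| sum_nonneg fun x hx => by
    obtain ⟨i, hi, rfl⟩ := mem_map.mp hx
    exact hg i (mem_add.mpr (Or.inr hi))

theorem sum_map_le_sum_map_filter_pos (s : Multiset ι) (g : ι → M) :
    (s.map g).sum ≤ ((s.filter (0 < g ·)).map g).sum := by
  calc (s.map g).sum
      = ((s.filter (0 < g ·)).map g).sum + ((s.filter (¬ 0 < g ·)).map g).sum := by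
        rw [← sum_add, ← map_add, filter_add_not]
    _ ≤ ((s.filter (0 < g ·)).map g).sum + ((s.filter (¬ 0 < g ·)).map fun _ => 0).sum := by
        gcongr
        exact sum_map_le_sum_map _ _ fun i hi => not_lt.mp (mem_filter.mp hi).2
    _ = ((s.filter (0 < g ·)).map g).sum := by simp

theorem sum_map_le_sum_map_filter_pos_of_le {s t : Multiset ι} (hst : s ≤ t) (g : ι → M) :
    (s.map g).sum ≤ ((t.filter (0 < g ·)).map g).sum :=
  (sum_map_le_sum_map_filter_pos s g).trans <|
    sum_map_le_sum_map_of_le_of_nonneg (filter_le_filter _ hst) fun _ hi =>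
      (mem_filter.mp hi).2.le

end Multiset

theorem dotP_wStar (d : ℕ) (α : ℝ) (η w0 x : Fin d → ℝ) (S : Multiset ((Fin d → ℝ) × ℝ)) :
    dotP d (wStar d α η w0 S) x
      = dotP d w0 x + (S.map fun p => α * p.2 * dotP d (fun i => η i * p.1 i) x).sum := by
  simp only [dotP, wStar, add_mul, Finset.sum_add_distrib, ← Multiset.sum_map_mul_right,
    Finset.mul_sum, Multiset.sum_map_sum, mul_assoc]

theorem stmt1_general (d : ℕ) (α : ℝ) (η : Fin d → ℝ)
    (w0 xtest : Fin d → ℝ) (ytest : ℝ)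
    (T : Multiset ((Fin d → ℝ) × ℝ)) :
    (∃ T' : Multiset ((Fin d → ℝ) × ℝ), T' ≤ T ∧
        0 ≤ ytest * dotP d (wStar d α η w0 T') xtest) ↔
      0 ≤ ytest * dotP d (wStar d α η w0
        (T.filter (fun p =>
          0 < ytest * (α * p.2) * dotP d (fun i => η i * p.1 i) xtest))) xtest := by
  set gain : (Fin d → ℝ) × ℝ → ℝ :=
    fun p => ytest * (α * p.2) * dotP d (fun i => η i * p.1 i) xtest
  have margin_eq : ∀ S, ytest * dotP d (wStar d α η w0 S) xtest
      = ytest * dotP d w0 xtest + (S.map gain).sum := by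
    intro S
    simp only [dotP_wStar, mul_add, ← Multiset.sum_map_mul_left, gain, mul_assoc]
  refine ⟨fun ⟨T', hT', hmargin⟩ => ?_, fun h => ⟨_, Multiset.filter_le _ _, h⟩⟩
  rw [margin_eq] at hmargin ⊢
  linarith [Multiset.sum_map_le_sum_map_filter_pos_of_le hT' gain]

/-- Correctness of the greedy GTA algorithm for the linear loss: there exists a sub-multiset
`T' ⊆ T` with `y_test ⟨w*(T'), x_test⟩ ≥ 0` if and only if the sub-multiset
`T* = {(x,y) ∈ T : y_test α y ⟨η ⊗ x, x_test⟩ > 0}` of good samples satisfies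
`y_test ⟨w*(T*), x_test⟩ ≥ 0`. -/
theorem stmt1 (d : ℕ) (α β : ℝ) (hα : 0 < α) (η : Fin d → ℝ) (hη : ∀ i, 0 ≤ η i)
    (w0 xtest : Fin d → ℝ) (ytest : ℝ) (hytest : ytest = 1 ∨ ytest = -1)
    (T : Multiset ((Fin d → ℝ) × ℝ)) (hT : ∀ p ∈ T, p.2 = 1 ∨ p.2 = -1) :
    (∃ T' : Multiset ((Fin d → ℝ) × ℝ), T' ≤ T ∧
        0 ≤ ytest * dotP d (wStar d α η w0 T') xtest) ↔
      0 ≤ ytest * dotP d (wStar d α η w0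
        (T.filter (fun p =>
          0 < ytest * (α * p.2) * dotP d (fun i => η i * p.1 i) xtest))) xtest :=
  stmt1_general d α η w0 xtest ytest T
end

section
/- In the subset-sum construction with β ≥ −1: for every sublist L of the training list v₁,…,vₙ,v_c,v_b,v_a, if the hinge fold over L starting from w⁰ ends at a parameter w with ⟨w, u⟩ ≥ 0, then each of v_c, v_b and v_a belongs to L, and letting w_c, w_b, w_a denote the current parameter at the moment v_c, v_b, v_a respectively is processed, one has ⟨w_k, v_k⟩ < γ for each k ∈ {c, b, a}. -/
open Classical

/-- Dot product on `ℝ²`. -/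
noncomputable def dot2 (w v : ℝ × ℝ) : ℝ := w.1 * v.1 + w.2 * v.2

/-- Hinge update with parameter `β` on `ℝ²` (with `α = 1` and unit learning rate):
if `⟨w, v⟩ < β` (the vector is activated) then `w` becomes `w + v`, otherwise unchanged. -/
noncomputable def hstep (β : ℝ) (w v : ℝ × ℝ) : ℝ × ℝ :=
  if dot2 w v < β then w + v else w

lemma hstep_fst_le (β : ℝ) (w x : ℝ × ℝ) (hx : 0 ≤ x.1) : (hstep β w x).1 ≤ w.1 + x.1 := by
  unfold hstep; split
  · simp [Prod.fst_add]
  · linarith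

lemma foldl_fst_le (β c : ℝ) (hc : 0 ≤ c) :
    ∀ (M : List (ℝ × ℝ)) (w : ℝ × ℝ), (∀ x ∈ M, 0 ≤ x.1 ∧ x.1 ≤ c) →
      (M.foldl (hstep β) w).1 ≤ w.1 + M.length * c := by
  intro M
  induction M with
  | nil => intro w _; simp
  | cons x M ih =>
    intro w h
    have hx := h x (by simp)
    have h2 : ∀ y ∈ M, 0 ≤ y.1 ∧ y.1 ≤ c := fun y hy => h y (by simp [hy])
    have := ih (hstep β w x) h2
    have hb := hstep_fst_le β w x hx.1
    simp only [List.foldl_cons, List.length_cons]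
    push_cast
    nlinarith [hx.2]

set_option maxHeartbeats 1000000 in
/-- In the subset-sum construction with `β ≥ -1`: if a sublist `L` of the training list
`v₁, …, vₙ, v_c, v_b, v_a` makes the hinge fold from `w⁰` end at `w` with `⟨w, u⟩ ≥ 0`,
then `v_c`, `v_b`, `v_a` all belong to `L` (so `L = L' ++ [v_c, v_b, v_a]` for some sublist
`L'` of `v₁, …, vₙ`), and the current parameter `w_k` at the moment `v_k` is processed
satisfies `⟨w_k, v_k⟩ < γ` for each `k ∈ {c, b, a}`. -/
theorem stmt6 (β : ℝ) (hβ : -1 ≤ β) (n m t : ℕ) (hn : 1 < n) (ht : 0 < t)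
    (a : Fin n → ℕ) (ha : ∀ i, 0 < a i) (hm : m = Finset.univ.sup a)
    (γ : ℝ) (hγ : γ = max β 1)
    (v : Fin n → ℝ × ℝ)
    (hv : ∀ i, v i = (Real.sqrt γ / (n + 1), 3 * Real.sqrt γ * a i))
    (vc vb va w0 u : ℝ × ℝ)
    (hvc : vc = ((18 * n ^ 2 * m ^ 2 - 2) * Real.sqrt γ, -3 * t * Real.sqrt γ))
    (hvb : vb = (Real.sqrt γ, -Real.sqrt γ))
    (hva : va = (Real.sqrt γ, Real.sqrt γ))
    (hw0 : w0 = (-(18 * n ^ 2 * m ^ 2) * Real.sqrt γ, 0))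
    (hu : u = (1, 0))
    (L : List (ℝ × ℝ)) (hL : L.Sublist (List.ofFn v ++ [vc, vb, va]))
    (hw : 0 ≤ dot2 (L.foldl (hstep β) w0) u) :
    vc ∈ L ∧ vb ∈ L ∧ va ∈ L ∧
    ∃ L' : List (ℝ × ℝ), L'.Sublist (List.ofFn v) ∧ L = L' ++ [vc, vb, va] ∧
      dot2 (L'.foldl (hstep β) w0) vc < γ ∧
      dot2 (hstep β (L'.foldl (hstep β) w0) vc) vb < γ ∧
      dot2 (hstep β (hstep β (L'.foldl (hstep β) w0) vc) vb) va < γ := by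
  set s := Real.sqrt γ with hs
  have hγ1 : 1 ≤ γ := hγ ▸ le_max_right β 1
  have hβγ : β ≤ γ := hγ ▸ le_max_left β 1
  have hs1 : 1 ≤ s := Real.one_le_sqrt.mpr hγ1
  have hs0 : 0 < s := by linarith
  -- numeric bounds
  have hN : (2:ℝ) ≤ (n:ℝ) := by exact_mod_cast hn
  have hm1 : 1 ≤ m := by
    have := ha ⟨0, by omega⟩
    have h2 : a ⟨0, by omega⟩ ≤ m := hm ▸ Finset.le_sup (Finset.mem_univ _)
    omega
  have hM : (1:ℝ) ≤ (m:ℝ) := by exact_mod_cast hm1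
  set K : ℝ := 18 * (n:ℝ)^2 * (m:ℝ)^2 with hKdef
  have hK : 72 ≤ K := by
    have h4 : (4:ℝ) ≤ (n:ℝ)^2 := by nlinarith
    have h1' : (1:ℝ) ≤ (m:ℝ)^2 := by nlinarith
    nlinarith [mul_le_mul h4 h1' (by norm_num : (0:ℝ) ≤ 1) (by positivity : (0:ℝ) ≤ (n:ℝ)^2)]
  -- decompose L
  obtain ⟨L₁, L₂, hLe, hL1, hL2⟩ := List.sublist_append_iff.mp hL
  have hlen : L₁.length ≤ n := by
    have := hL1.length_le
    rwa [List.length_ofFn] at this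
  -- bound on fold over L₁
  set W := L₁.foldl (hstep β) w0 with hWdef
  have hWfst : W.1 < (1 - K) * s := by
    have hmem : ∀ x ∈ L₁, 0 ≤ x.1 ∧ x.1 ≤ s / (n + 1) := by
      intro x hx
      have hx2 := hL1.subset hx
      obtain ⟨i, hi⟩ := List.mem_ofFn.mp hx2
      rw [← hi, hv i]
      refine ⟨?_, le_of_eq rfl⟩
      show (0:ℝ) ≤ s / (↑n + 1)
      positivity
    have hc : (0:ℝ) ≤ s / (n + 1) := by positivity
    have h1 := foldl_fst_le β (s / (n + 1)) hc L₁ w0 hmem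
    have h2 : (L₁.length : ℝ) * (s / (n + 1)) ≤ (n:ℝ) * (s / (n + 1)) := by
      have : (L₁.length : ℝ) ≤ (n:ℝ) := by exact_mod_cast hlen
      nlinarith
    have h3 : (n:ℝ) * (s / (n + 1)) < s := by
      rw [div_eq_mul_inv]
      have hpos : (0:ℝ) < (n:ℝ) + 1 := by linarith
      rw [mul_comm s, ← mul_assoc]
      rw [show (n:ℝ) * (((n:ℝ)+1)⁻¹) * s = ((n:ℝ) / ((n:ℝ)+1)) * s by ring]
      have : (n:ℝ) / ((n:ℝ)+1) < 1 := by
        rw [div_lt_one hpos]; linarith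
      nlinarith
    have hw0fst : w0.1 = -K * s := by rw [hw0]
    rw [← hWdef] at h1
    rw [hw0fst] at h1
    linarith
  -- first coordinates of the special vectors
  have hvcfst : vc.1 = (K - 2) * s := by rw [hvc]
  have hvbfst : vb.1 = s := by rw [hvb]
  have hvafst : va.1 = s := by rw [hva]
  have hvc0 : 0 ≤ vc.1 := by rw [hvcfst]; nlinarith
  have hvb0 : 0 ≤ vb.1 := by rw [hvbfst]; linarith
  have hva0 : 0 ≤ va.1 := by rw [hvafst]; linarith
  -- final value
  have hfold : L.foldl (hstep β) w0 = L₂.foldl (hstep β) W := by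
    rw [hLe, List.foldl_append]
  have hfin : 0 ≤ (L₂.foldl (hstep β) W).1 := by
    rw [← hfold]
    have : dot2 (L.foldl (hstep β) w0) u = (L.foldl (hstep β) w0).1 := by
      rw [hu]; simp [dot2]
    linarith [hw, this.symm.le, this.le]
  -- enumerate sublists of [vc, vb, va]
  have hcases : L₂ = [] ∨ L₂ = [va] ∨ L₂ = [vb] ∨ L₂ = [vb, va] ∨ L₂ = [vc] ∨
      L₂ = [vc, va] ∨ L₂ = [vc, vb] ∨ L₂ = [vc, vb, va] := by
    rcases List.sublist_cons_iff.mp hL2 with h | ⟨r, hr, hrs⟩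
    · rcases List.sublist_cons_iff.mp h with h | ⟨r, hr, hrs⟩
      · rcases List.sublist_cons_iff.mp h with h | ⟨r, hr, hrs⟩
        · left; exact List.sublist_nil.mp h
        · rw [List.sublist_nil.mp hrs] at hr; right; left; exact hr
      · rcases List.sublist_cons_iff.mp hrs with h | ⟨r', hr', hrs'⟩
        · rw [List.sublist_nil.mp h] at hr; right; right; left; exact hr
        · rw [List.sublist_nil.mp hrs', ] at hr'
          rw [hr'] at hr; right; right; right; left; exact hr
    · rcases List.sublist_cons_iff.mp hrs with h | ⟨r', hr', hrs'⟩
      · rcases List.sublist_cons_iff.mp h with h | ⟨r'', hr'', hrs''⟩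
        · rw [List.sublist_nil.mp h] at hr
          right; right; right; right; left; exact hr
        · rw [List.sublist_nil.mp hrs''] at hr''; rw [hr''] at hr
          right; right; right; right; right; left; exact hr
      · rcases List.sublist_cons_iff.mp hrs' with h | ⟨r'', hr'', hrs''⟩
        · rw [List.sublist_nil.mp h] at hr'; rw [hr'] at hr
          right; right; right; right; right; right; left; exact hr
        · rw [List.sublist_nil.mp hrs''] at hr''; rw [hr''] at hr'; rw [hr'] at hr
          right; right; right; right; right; right; right; exact hr
  have hWneg : W.1 < -2 * s := by nlinarith
  rcases hcases with h | h | h | h | h | h | h | h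
  · exfalso; rw [h] at hfin; simp at hfin; linarith
  · exfalso; rw [h] at hfin; simp only [List.foldl_cons, List.foldl_nil] at hfin
    have := hstep_fst_le β W va hva0
    rw [hvafst] at this; linarith
  · exfalso; rw [h] at hfin; simp only [List.foldl_cons, List.foldl_nil] at hfin
    have := hstep_fst_le β W vb hvb0
    rw [hvbfst] at this; linarith
  · exfalso; rw [h] at hfin; simp only [List.foldl_cons, List.foldl_nil] at hfin
    have h1 := hstep_fst_le β W vb hvb0
    have h2 := hstep_fst_le β (hstep β W vb) va hva0
    rw [hvbfst] at h1; rw [hvafst] at h2; linarith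
  · exfalso; rw [h] at hfin; simp only [List.foldl_cons, List.foldl_nil] at hfin
    have := hstep_fst_le β W vc hvc0
    rw [hvcfst] at this; nlinarith
  · exfalso; rw [h] at hfin; simp only [List.foldl_cons, List.foldl_nil] at hfin
    have h1 := hstep_fst_le β W vc hvc0
    have h2 := hstep_fst_le β (hstep β W vc) va hva0
    rw [hvcfst] at h1; rw [hvafst] at h2; nlinarith
  · exfalso; rw [h] at hfin; simp only [List.foldl_cons, List.foldl_nil] at hfin
    have h1 := hstep_fst_le β W vc hvc0
    have h2 := hstep_fst_le β (hstep β W vc) vb hvb0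
    rw [hvcfst] at h1; rw [hvbfst] at h2; nlinarith
  · -- main case : L₂ = [vc, vb, va]
    rw [h] at hfin hLe
    simp only [List.foldl_cons, List.foldl_nil] at hfin
    -- vc activated
    have hcact : dot2 W vc < β := by
      by_contra hcon
      have heq : hstep β W vc = W := by unfold hstep; rw [if_neg hcon]
      rw [heq] at hfin
      have h1 := hstep_fst_le β W vb hvb0
      have h2 := hstep_fst_le β (hstep β W vb) va hva0
      rw [hvbfst] at h1; rw [hvafst] at h2; linarith
    have heqc : hstep β W vc = W + vc := by unfold hstep; rw [if_pos hcact]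
    have hw1fst : (W + vc).1 < -s := by
      have : (W + vc).1 = W.1 + vc.1 := rfl
      rw [this, hvcfst]; nlinarith
    have hbact : dot2 (W + vc) vb < β := by
      by_contra hcon
      have heq : hstep β (W + vc) vb = W + vc := by unfold hstep; rw [if_neg hcon]
      rw [heqc, heq] at hfin
      have h2 := hstep_fst_le β (W + vc) va hva0
      rw [hvafst] at h2; linarith
    have heqb : hstep β (W + vc) vb = W + vc + vb := by unfold hstep; rw [if_pos hbact]
    have hw2fst : (W + vc + vb).1 < 0 := by
      have : (W + vc + vb).1 = (W + vc).1 + vb.1 := rfl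
      rw [this, hvbfst]; linarith
    have haact : dot2 (W + vc + vb) va < β := by
      by_contra hcon
      have heq : hstep β (W + vc + vb) va = W + vc + vb := by unfold hstep; rw [if_neg hcon]
      rw [heqc, heqb, heq] at hfin
      linarith
    refine ⟨?_, ?_, ?_, L₁, hL1, hLe, ?_, ?_, ?_⟩
    · rw [hLe]; simp
    · rw [hLe]; simp
    · rw [hLe]; simp
    · rw [← hWdef]; linarith
    · rw [← hWdef, heqc]; linarith
    · rw [← hWdef, heqc, heqb]; linarith
end

section
/- In the SAT construction: for any T ⊆ T₀ and any order of epoch 1, for all 1 ≤ γ ≤ m: if there exist indices i₁,i₂,i₃ with clause(γ,i₁,i₂,i₃) ∈ T, then w_{b_γ}^{(1)} = 0 and w_{c_γ}^{(1)} = 1/2 + 1/(200N); otherwise w_{b_γ}^{(1)} = −1 and w_{c_γ}^{(1)} = 1/2. -/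
open Classical

/-- Coordinate index set of `ℝ^N`, `N = n + 2m + 1`: coordinates `c₁, …, c_m`,
`x₁, …, xₙ`, `b₁, …, b_m`, and `dummy`. -/
abbrev SatIdx (n m : ℕ) := (Fin m ⊕ Fin n) ⊕ (Fin m ⊕ Unit)

/-- A gadget of the training data `T₀`: either `var(i)` or `clause(γ, i₁, i₂, i₃)`. -/
abbrev Gadget (n m : ℕ) := Fin n ⊕ Fin m

/-- The coordinate `c_γ`. -/
def cIdx (n m : ℕ) (γ : Fin m) : SatIdx n m := Sum.inl (Sum.inl γ)

/-- The coordinate `x_i`. -/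
def xIdx (n m : ℕ) (i : Fin n) : SatIdx n m := Sum.inl (Sum.inr i)

/-- The coordinate `b_γ`. -/
def bIdx (n m : ℕ) (γ : Fin m) : SatIdx n m := Sum.inr (Sum.inl γ)

/-- The coordinate `dummy`. -/
def dIdx (n m : ℕ) : SatIdx n m := Sum.inr (Sum.inr ())

/-- `N = n + 2m + 1`. -/
def Nval (n m : ℕ) : ℕ := n + 2 * m + 1

/-- The derivative factor `g` of the loss function: `g(s) = -12N/5` on `U(-5, 0.01)`,
`g(s) = -1` on `U(-1/2, 0.26)`, `g(s) = -1/(1000N)` on `U(±1, 0.01) ∪ U(±3, 0.01)`,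
and `g(s) = 0` otherwise. -/
noncomputable def gfun (n m : ℕ) (s : ℝ) : ℝ :=
  if |s - (-5)| < 0.01 then -(12 * (Nval n m : ℝ) / 5)
  else if |s - (-(1 : ℝ) / 2)| < 0.26 then -1
  else if |s - 1| < 0.01 ∨ |s - (-1)| < 0.01 ∨ |s - 3| < 0.01 ∨ |s - (-3)| < 0.01 then
    -(1 / (1000 * (Nval n m : ℝ)))
  else 0

/-- The learning rates: `η_{c_γ} = 5`, `η_{x_i} = 1/(6N)`, `η_{b_γ} = 2000N`,
`η_dummy = 1`. -/
noncomputable def eta (n m : ℕ) : SatIdx n m → ℝ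
  | Sum.inl (Sum.inl _) => 5
  | Sum.inl (Sum.inr _) => 1 / (6 * (Nval n m : ℝ))
  | Sum.inr (Sum.inl _) => 2000 * (Nval n m : ℝ)
  | Sum.inr (Sum.inr _) => 1

/-- The initial parameter: `w⁰_{c_γ} = 1/2`, `w⁰_{x_i} = -1`, `w⁰_{b_γ} = -1`,
`w⁰_dummy = 1`. -/
noncomputable def winit (n m : ℕ) : SatIdx n m → ℝ
  | Sum.inl (Sum.inl _) => 1 / 2
  | Sum.inl (Sum.inr _) => -1
  | Sum.inr (Sum.inl _) => -1
  | Sum.inr (Sum.inr _) => 1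

/-- Dot product on `ℝ^N`. -/
noncomputable def dotN (n m : ℕ) (w x : SatIdx n m → ℝ) : ℝ := ∑ j, w j * x j

/-- The input of the gadget `var(i)`: `x_{x_i} = 5`, all other coordinates `0`. -/
noncomputable def varX (n m : ℕ) (i : Fin n) : SatIdx n m → ℝ :=
  fun j => if j = xIdx n m i then 5 else 0

/-- The input of the gadget `clause(γ, i₁, i₂, i₃)`: `x_{c_γ} = 1`,
`x_{x_{i₁}} = x_{x_{i₂}} = x_{x_{i₃}} = 1`, `x_{b_γ} = 1/2`, all other coordinates `0`. -/
noncomputable def clauseX (n m : ℕ) (γ : Fin m) (i₁ i₂ i₃ : Fin n) : SatIdx n m → ℝ :=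
  fun j =>
    if j = cIdx n m γ then 1
    else if j = xIdx n m i₁ ∨ j = xIdx n m i₂ ∨ j = xIdx n m i₃ then 1
    else if j = bIdx n m γ then 1 / 2
    else 0

/-- The training sample `(x, y)` associated with a gadget (all labels are `1`). -/
noncomputable def gadgetSample (n m : ℕ) (cl : Fin m → Fin n × Fin n × Fin n) :
    Gadget n m → (SatIdx n m → ℝ) × ℝ
  | Sum.inl i => (varX n m i, 1)
  | Sum.inr γ => (clauseX n m γ (cl γ).1 (cl γ).2.1 (cl γ).2.2, 1)

/-- Processing a training sample `(x, y)` at parameter `w` updates each coordinate by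
`w_j ← w_j - η_j · g(y wᵀx) · y x_j`. -/
noncomputable def sgdStep (n m : ℕ) (cl : Fin m → Fin n × Fin n × Fin n)
    (w : SatIdx n m → ℝ) (gd : Gadget n m) : SatIdx n m → ℝ :=
  fun j => w j - eta n m j *
    gfun n m ((gadgetSample n m cl gd).2 * dotN n m w (gadgetSample n m cl gd).1) *
    ((gadgetSample n m cl gd).2 * (gadgetSample n m cl gd).1 j)

/-- `runEpochs n m cl os e` is the parameter `w^{(e)}` at the end of epoch `e`, where
epoch `e ≥ 1` processes the samples in the order given by the list `os e`, starting from
the initial parameter `w⁰`. -/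
noncomputable def runEpochs (n m : ℕ) (cl : Fin m → Fin n × Fin n × Fin n)
    (os : ℕ → List (Gadget n m)) : ℕ → SatIdx n m → ℝ
  | 0 => winit n m
  | e + 1 => (os (e + 1)).foldl (sgdStep n m cl) (runEpochs n m cl os e)

/-- Each clause is given by a triple of pairwise distinct variable indices. -/
def ClauseDistinct (n m : ℕ) (cl : Fin m → Fin n × Fin n × Fin n) : Prop :=
  ∀ γ : Fin m, (cl γ).1 ≠ (cl γ).2.1 ∧ (cl γ).1 ≠ (cl γ).2.2 ∧ (cl γ).2.1 ≠ (cl γ).2.2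

/-- Exactly one of three propositions holds. -/
def ExactlyOne (P Q R : Prop) : Prop :=
  (P ∧ ¬Q ∧ ¬R) ∨ (¬P ∧ Q ∧ ¬R) ∨ (¬P ∧ ¬Q ∧ R)

section Aux

/-- Perturbation unit `1/(6000 N²)`. -/
noncomputable def c0 (n m : ℕ) : ℝ := 1 / (6000 * ((Nval n m : ℝ))^2)

lemma NvalR_pos (n m : ℕ) : (0:ℝ) < (Nval n m : ℝ) := by
  have : 0 < Nval n m := by unfold Nval; omega
  exact_mod_cast this

lemma c0_nonneg (n m : ℕ) : 0 ≤ c0 n m := by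
  have := NvalR_pos n m; unfold c0; positivity

lemma A_le (n m k : ℕ) (hk : k ≤ n + m) : (k:ℝ) * c0 n m ≤ 1/6000 := by
  have hN := NvalR_pos n m
  have hk' : (k:ℝ) ≤ (Nval n m : ℝ) := by
    have : k ≤ Nval n m := by unfold Nval at *; omega
    exact_mod_cast this
  have h1 : (1:ℝ) ≤ (Nval n m : ℝ) := by
    have : 1 ≤ Nval n m := by unfold Nval; omega
    exact_mod_cast this
  rw [c0, mul_one_div, div_le_div_iff₀ (by positivity) (by norm_num)]
  nlinarith

lemma dot_var (n m : ℕ) (w : SatIdx n m → ℝ) (i : Fin n) :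
    dotN n m w (varX n m i) = w (xIdx n m i) * 5 := by
  unfold dotN varX
  rw [Finset.sum_eq_single (xIdx n m i)]
  · simp
  · intro j _ hj; simp [hj]
  · simp

lemma dot_clause (n m : ℕ) (γ : Fin m) (i1 i2 i3 : Fin n)
    (h12 : i1 ≠ i2) (h13 : i1 ≠ i3) (h23 : i2 ≠ i3) (w : SatIdx n m → ℝ) :
    dotN n m w (clauseX n m γ i1 i2 i3) =
      w (cIdx n m γ) + (w (xIdx n m i1) + w (xIdx n m i2) + w (xIdx n m i3))
        + w (bIdx n m γ) * (1/2) := by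
  have hx : ∀ j, clauseX n m γ i1 i2 i3 j =
      (if j = cIdx n m γ then (1:ℝ) else 0)
      + ((if j = xIdx n m i1 then (1:ℝ) else 0)
        + (if j = xIdx n m i2 then (1:ℝ) else 0)
        + (if j = xIdx n m i3 then (1:ℝ) else 0))
      + (if j = bIdx n m γ then (1/2 : ℝ) else 0) := by
    intro j
    unfold clauseX
    by_cases h0 : j = cIdx n m γ <;> by_cases h1 : j = xIdx n m i1 <;>
      by_cases h2 : j = xIdx n m i2 <;> by_cases h3 : j = xIdx n m i3 <;>
      by_cases h4 : j = bIdx n m γ <;>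
      simp_all [cIdx, xIdx, bIdx]
  simp only [dotN, hx, mul_add, mul_ite, mul_zero, mul_one,
    Finset.sum_add_distrib, Finset.sum_ite_eq', Finset.mem_univ, if_true]
  try ring

end Aux
section Aux2

lemma gfun_near5 (n m : ℕ) (s : ℝ) (h : |s + 5| ≤ 0.005) :
    gfun n m s = -(12 * (Nval n m : ℝ) / 5) := by
  have hc : |s - (-5)| < 0.01 := by
    have hs : s - (-5) = s + 5 := by ring
    rw [hs]; exact lt_of_le_of_lt h (by norm_num)
  unfold gfun
  rw [if_pos hc]

lemma gfun_odd (n m : ℕ) (s S : ℝ) (hS : S = -3 ∨ S = -1 ∨ S = 1 ∨ S = 3)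
    (h : |s - S| ≤ 0.0005) :
    gfun n m s = -(1 / (1000 * (Nval n m : ℝ))) := by
  obtain ⟨hl, hr⟩ := abs_le.mp h
  have hc1 : ¬ |s - (-5)| < 0.01 := by
    rw [not_lt, le_abs]
    exact Or.inl (by rcases hS with h'|h'|h'|h' <;> linarith)
  have hc2 : ¬ |s - (-(1 : ℝ) / 2)| < 0.26 := by
    rw [not_lt, le_abs]
    rcases hS with h'|h'|h'|h'
    · exact Or.inr (by linarith)
    · exact Or.inr (by linarith)
    · exact Or.inl (by linarith)
    · exact Or.inl (by linarith)
  have hc3 : |s - 1| < 0.01 ∨ |s - (-1)| < 0.01 ∨ |s - 3| < 0.01 ∨ |s - (-3)| < 0.01 := by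
    rcases hS with h'|h'|h'|h' <;> subst h'
    · exact Or.inr (Or.inr (Or.inr (lt_of_le_of_lt h (by norm_num))))
    · exact Or.inr (Or.inl (lt_of_le_of_lt h (by norm_num)))
    · exact Or.inl (lt_of_le_of_lt h (by norm_num))
    · exact Or.inr (Or.inr (Or.inl (lt_of_le_of_lt h (by norm_num))))
  unfold gfun
  rw [if_neg hc1, if_neg hc2, if_pos hc3]

lemma sgd_var (n m : ℕ) (cl : Fin m → Fin n × Fin n × Fin n)
    (w : SatIdx n m → ℝ) (i : Fin n) (j : SatIdx n m) :
    sgdStep n m cl w (Sum.inl i) j =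
      w j - eta n m j * gfun n m (dotN n m w (varX n m i)) * varX n m i j := by
  simp [sgdStep, gadgetSample]

lemma sgd_clause (n m : ℕ) (cl : Fin m → Fin n × Fin n × Fin n)
    (w : SatIdx n m → ℝ) (γ : Fin m) (j : SatIdx n m) :
    sgdStep n m cl w (Sum.inr γ) j =
      w j - eta n m j *
        gfun n m (dotN n m w (clauseX n m γ (cl γ).1 (cl γ).2.1 (cl γ).2.2)) *
        clauseX n m γ (cl γ).1 (cl γ).2.1 (cl γ).2.2 j := by
  simp [sgdStep, gadgetSample]

lemma varX_c (n m : ℕ) (i : Fin n) (γ : Fin m) : varX n m i (cIdx n m γ) = 0 := by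
  simp [varX, cIdx, xIdx]

lemma varX_b (n m : ℕ) (i : Fin n) (γ : Fin m) : varX n m i (bIdx n m γ) = 0 := by
  simp [varX, bIdx, xIdx]

lemma varX_x_ne (n m : ℕ) (i i' : Fin n) (h : i' ≠ i) : varX n m i (xIdx n m i') = 0 := by
  simp [varX, xIdx, h]

lemma varX_x (n m : ℕ) (i : Fin n) : varX n m i (xIdx n m i) = 5 := by
  simp [varX]

lemma clauseX_c_self (n m : ℕ) (γ : Fin m) (i1 i2 i3 : Fin n) :
    clauseX n m γ i1 i2 i3 (cIdx n m γ) = 1 := by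
  simp [clauseX]

lemma clauseX_c_ne (n m : ℕ) (γ γ' : Fin m) (i1 i2 i3 : Fin n) (h : γ' ≠ γ) :
    clauseX n m γ i1 i2 i3 (cIdx n m γ') = 0 := by
  simp [clauseX, cIdx, xIdx, bIdx, h]

lemma clauseX_b_self (n m : ℕ) (γ : Fin m) (i1 i2 i3 : Fin n) :
    clauseX n m γ i1 i2 i3 (bIdx n m γ) = 1 / 2 := by
  simp [clauseX, cIdx, xIdx, bIdx]

lemma clauseX_b_ne (n m : ℕ) (γ γ' : Fin m) (i1 i2 i3 : Fin n) (h : γ' ≠ γ) :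
    clauseX n m γ i1 i2 i3 (bIdx n m γ') = 0 := by
  simp [clauseX, cIdx, xIdx, bIdx, h]

lemma clauseX_x_mem (n m : ℕ) (γ : Fin m) (i1 i2 i3 i : Fin n)
    (h : i = i1 ∨ i = i2 ∨ i = i3) :
    clauseX n m γ i1 i2 i3 (xIdx n m i) = 1 := by
  rcases h with h|h|h <;> subst h <;> simp [clauseX, cIdx, xIdx, bIdx]

lemma clauseX_x_ne (n m : ℕ) (γ : Fin m) (i1 i2 i3 i : Fin n)
    (h1 : i ≠ i1) (h2 : i ≠ i2) (h3 : i ≠ i3) :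
    clauseX n m γ i1 i2 i3 (xIdx n m i) = 0 := by
  simp [clauseX, cIdx, xIdx, bIdx, h1, h2, h3]

lemma eta_c (n m : ℕ) (γ : Fin m) : eta n m (cIdx n m γ) = 5 := rfl
lemma eta_b (n m : ℕ) (γ : Fin m) : eta n m (bIdx n m γ) = 2000 * (Nval n m : ℝ) := rfl
lemma eta_x (n m : ℕ) (i : Fin n) : eta n m (xIdx n m i) = 1 / (6 * (Nval n m : ℝ)) := rfl

end Aux2
section Aux3

/-- Invariant after processing the gadgets of the list `P` (each at most once). -/
def SatInv (n m : ℕ) (P : List (Gadget n m)) (w : SatIdx n m → ℝ) : Prop :=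
  (∀ γ : Fin m, Sum.inr γ ∈ P →
      w (cIdx n m γ) = 1 / 2 + 1 / (200 * (Nval n m : ℝ)) ∧ w (bIdx n m γ) = 0) ∧
  (∀ γ : Fin m, Sum.inr γ ∉ P →
      w (cIdx n m γ) = 1 / 2 ∧ w (bIdx n m γ) = -1) ∧
  (∀ i : Fin n, Sum.inl i ∈ P →
      |w (xIdx n m i) - 1| ≤ (P.length : ℝ) * c0 n m) ∧
  (∀ i : Fin n, Sum.inl i ∉ P →
      |w (xIdx n m i) + 1| ≤ (P.length : ℝ) * c0 n m)

lemma inv_init (n m : ℕ) : SatInv n m [] (winit n m) := by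
  refine ⟨fun γ h => absurd h List.not_mem_nil, fun γ _ => ⟨rfl, rfl⟩,
    fun i h => absurd h List.not_mem_nil, fun i _ => ?_⟩
  show |(-1 : ℝ) + 1| ≤ _
  norm_num

lemma inv_step (n m : ℕ) (cl : Fin m → Fin n × Fin n × Fin n)
    (hcl : ClauseDistinct n m cl) (P : List (Gadget n m)) (gd : Gadget n m)
    (w : SatIdx n m → ℝ) (hw : SatInv n m P w) (hgd : gd ∉ P)
    (hlen : P.length + 1 ≤ n + m) :
    SatInv n m (P ++ [gd]) (sgdStep n m cl w gd) := by
  classical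
  obtain ⟨hc1, hc2, hx1, hx2⟩ := hw
  have hN := NvalR_pos n m
  have hNne : (Nval n m : ℝ) ≠ 0 := ne_of_gt hN
  have hc0 := c0_nonneg n m
  have hA : (P.length : ℝ) * c0 n m ≤ 1 / 6000 := A_le n m P.length (by omega)
  have hlen' : ((P ++ [gd]).length : ℝ) = (P.length : ℝ) + 1 := by
    simp
  have hrelax : ∀ v s : ℝ, |v - s| ≤ (P.length : ℝ) * c0 n m →
      |v - s| ≤ ((P ++ [gd]).length : ℝ) * c0 n m := by
    intro v s h
    rw [hlen']
    nlinarith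
  have hbump : ∀ v s : ℝ, |v - s| ≤ (P.length : ℝ) * c0 n m →
      |v + c0 n m - s| ≤ ((P ++ [gd]).length : ℝ) * c0 n m := by
    intro v s h
    rw [hlen']
    have h2 : v + c0 n m - s = (v - s) + c0 n m := by ring
    rw [h2]
    refine le_trans (abs_add_le _ _) ?_
    rw [abs_of_nonneg hc0]
    nlinarith
  rcases gd with i | γ'
  · -- var(i) gadget
    have hxi : |w (xIdx n m i) + 1| ≤ (P.length : ℝ) * c0 n m := hx2 i hgd
    obtain ⟨hl, hr⟩ := abs_le.mp hxi
    have hg : gfun n m (dotN n m w (varX n m i)) = -(12 * (Nval n m : ℝ) / 5) := by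
      apply gfun_near5
      rw [dot_var]
      have : w (xIdx n m i) * 5 + 5 = 5 * (w (xIdx n m i) + 1) := by ring
      rw [this, abs_mul, abs_of_nonneg (by norm_num : (0:ℝ) ≤ 5)]
      calc (5:ℝ) * |w (xIdx n m i) + 1| ≤ 5 * (1/6000) := by
            have := le_trans hxi hA; linarith
        _ ≤ 0.005 := by norm_num
    have hxnew : sgdStep n m cl w (Sum.inl i) (xIdx n m i) = w (xIdx n m i) + 2 := by
      rw [sgd_var, hg, varX_x, eta_x]
      field_simp
      ring
    refine ⟨?_, ?_, ?_, ?_⟩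
    · intro γ hγ
      have hγP : Sum.inr γ ∈ P := by simpa using hγ
      rw [sgd_var, sgd_var, varX_c, varX_b]
      simpa using hc1 γ hγP
    · intro γ hγ
      have hγP : Sum.inr γ ∉ P := fun h => hγ (by simp [h])
      rw [sgd_var, sgd_var, varX_c, varX_b]
      simpa using hc2 γ hγP
    · intro i' hi'
      by_cases h : i' = i
      · subst h
        rw [hxnew]
        have : w (xIdx n m i') + 2 - 1 = w (xIdx n m i') + 1 := by ring
        rw [this, hlen']
        nlinarith
      · have hi'P : Sum.inl i' ∈ P := by
          rcases List.mem_append.mp hi' with h'|h'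
          · exact h'
          · simp at h'; exact absurd h' h
        rw [sgd_var, varX_x_ne n m i i' h]
        simpa using hrelax _ 1 (hx1 i' hi'P)
    · intro i' hi'
      have h : i' ≠ i := fun he => hi' (by simp [he])
      have hi'P : Sum.inl i' ∉ P := fun h' => hi' (by simp [h'])
      rw [sgd_var, varX_x_ne n m i i' h]
      have := hrelax (w (xIdx n m i')) (-1) (by
        have := hx2 i' hi'P
        rwa [sub_neg_eq_add])
      rw [sub_neg_eq_add] at this
      simpa using this
  · -- clause(γ') gadget
    obtain ⟨h12, h13, h23⟩ := hcl γ'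
    obtain ⟨hcold, hbold⟩ := hc2 γ' hgd
    set i1 := (cl γ').1
    set i2 := (cl γ').2.1
    set i3 := (cl γ').2.2
    haveI : Decidable ((Sum.inl i1 : Gadget n m) ∈ P) := Classical.dec _
    haveI : Decidable ((Sum.inl i2 : Gadget n m) ∈ P) := Classical.dec _
    haveI : Decidable ((Sum.inl i3 : Gadget n m) ∈ P) := Classical.dec _
    set s1 : ℝ := if (Sum.inl i1 : Gadget n m) ∈ P then 1 else -1 with hs1
    set s2 : ℝ := if (Sum.inl i2 : Gadget n m) ∈ P then 1 else -1 with hs2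
    set s3 : ℝ := if (Sum.inl i3 : Gadget n m) ∈ P then 1 else -1 with hs3
    have hb1 : |w (xIdx n m i1) - s1| ≤ (P.length : ℝ) * c0 n m := by
      rw [hs1]; split_ifs with h
      · exact hx1 i1 h
      · rw [sub_neg_eq_add]; exact hx2 i1 h
    have hb2 : |w (xIdx n m i2) - s2| ≤ (P.length : ℝ) * c0 n m := by
      rw [hs2]; split_ifs with h
      · exact hx1 i2 h
      · rw [sub_neg_eq_add]; exact hx2 i2 h
    have hb3 : |w (xIdx n m i3) - s3| ≤ (P.length : ℝ) * c0 n m := by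
      rw [hs3]; split_ifs with h
      · exact hx1 i3 h
      · rw [sub_neg_eq_add]; exact hx2 i3 h
    have hS : s1 + s2 + s3 = -3 ∨ s1 + s2 + s3 = -1 ∨ s1 + s2 + s3 = 1 ∨
        s1 + s2 + s3 = 3 := by
      rw [hs1, hs2, hs3]; split_ifs <;> norm_num
    have hdot : dotN n m w (clauseX n m γ' i1 i2 i3) =
        w (xIdx n m i1) + w (xIdx n m i2) + w (xIdx n m i3) := by
      rw [dot_clause n m γ' i1 i2 i3 h12 h13 h23, hcold, hbold]
      ring
    have hg : gfun n m (dotN n m w (clauseX n m γ' i1 i2 i3)) =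
        -(1 / (1000 * (Nval n m : ℝ))) := by
      apply gfun_odd n m _ (s1 + s2 + s3) hS
      rw [hdot]
      have he : w (xIdx n m i1) + w (xIdx n m i2) + w (xIdx n m i3) - (s1 + s2 + s3) =
          (w (xIdx n m i1) - s1) + (w (xIdx n m i2) - s2) + (w (xIdx n m i3) - s3) := by
        ring
      rw [he]
      refine le_trans (abs_add_le _ _) (le_trans (add_le_add (abs_add_le _ _) le_rfl) ?_)
      have := hA
      linarith
    have hcnew : sgdStep n m cl w (Sum.inr γ') (cIdx n m γ') =
        1 / 2 + 1 / (200 * (Nval n m : ℝ)) := by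
      rw [sgd_clause, hg, eta_c]
      show w (cIdx n m γ') - 5 * _ * clauseX n m γ' i1 i2 i3 (cIdx n m γ') = _
      rw [clauseX_c_self, hcold]
      field_simp
      ring
    have hbnew : sgdStep n m cl w (Sum.inr γ') (bIdx n m γ') = 0 := by
      rw [sgd_clause, hg, eta_b]
      show w (bIdx n m γ') - _ * _ * clauseX n m γ' i1 i2 i3 (bIdx n m γ') = _
      rw [clauseX_b_self, hbold]
      field_simp
      ring
    have hxnew : ∀ i : Fin n, i = i1 ∨ i = i2 ∨ i = i3 →
        sgdStep n m cl w (Sum.inr γ') (xIdx n m i) = w (xIdx n m i) + c0 n m := by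
      intro i hi
      rw [sgd_clause, hg, eta_x]
      show w (xIdx n m i) - _ * _ * clauseX n m γ' i1 i2 i3 (xIdx n m i) = _
      rw [clauseX_x_mem n m γ' i1 i2 i3 i hi]
      unfold c0
      field_simp
      ring
    refine ⟨?_, ?_, ?_, ?_⟩
    · intro γ hγ
      by_cases h : γ = γ'
      · subst h
        exact ⟨hcnew, hbnew⟩
      · have hγP : Sum.inr γ ∈ P := by
          rcases List.mem_append.mp hγ with h'|h'
          · exact h'
          · simp at h'; exact absurd h' h
        rw [sgd_clause, sgd_clause, clauseX_c_ne n m γ' γ _ _ _ h,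
          clauseX_b_ne n m γ' γ _ _ _ h]
        simpa using hc1 γ hγP
    · intro γ hγ
      have h : γ ≠ γ' := fun he => hγ (by simp [he])
      have hγP : Sum.inr γ ∉ P := fun h' => hγ (by simp [h'])
      rw [sgd_clause, sgd_clause, clauseX_c_ne n m γ' γ _ _ _ h,
        clauseX_b_ne n m γ' γ _ _ _ h]
      simpa using hc2 γ hγP
    · intro i hi
      have hiP : Sum.inl i ∈ P := by
        rcases List.mem_append.mp hi with h'|h'
        · exact h'
        · simp at h'
      by_cases h : i = i1 ∨ i = i2 ∨ i = i3
      · rw [hxnew i h]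
        have hb : |w (xIdx n m i) - 1| ≤ (P.length : ℝ) * c0 n m := hx1 i hiP
        exact hbump _ 1 hb
      · push_neg at h
        rw [sgd_clause, clauseX_x_ne n m γ' i1 i2 i3 i h.1 h.2.1 h.2.2]
        simpa using hrelax _ 1 (hx1 i hiP)
    · intro i hi
      have hiP : Sum.inl i ∉ P := fun h' => hi (by simp [h'])
      by_cases h : i = i1 ∨ i = i2 ∨ i = i3
      · rw [hxnew i h]
        have hb : |w (xIdx n m i) - (-1)| ≤ (P.length : ℝ) * c0 n m := by
          rw [sub_neg_eq_add]; exact hx2 i hiP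
        have := hbump _ (-1) hb
        rwa [sub_neg_eq_add] at this
      · push_neg at h
        rw [sgd_clause, clauseX_x_ne n m γ' i1 i2 i3 i h.1 h.2.1 h.2.2]
        have := hrelax (w (xIdx n m i)) (-1) (by rw [sub_neg_eq_add]; exact hx2 i hiP)
        rw [sub_neg_eq_add] at this
        simpa using this

end Aux3
section Aux4

lemma inv_fold (n m : ℕ) (cl : Fin m → Fin n × Fin n × Fin n)
    (hcl : ClauseDistinct n m cl) :
    ∀ (L P : List (Gadget n m)) (w : SatIdx n m → ℝ),
      (P ++ L).Nodup → (P ++ L).length ≤ n + m → SatInv n m P w →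
      SatInv n m (P ++ L) (L.foldl (sgdStep n m cl) w) := by
  intro L
  induction L with
  | nil => intro P w _ _ h; simpa using h
  | cons g L' ih =>
    intro P w hnd hlen hw
    have he : (P ++ [g]) ++ L' = P ++ g :: L' := by simp
    have hg : g ∉ P := by
      have h' := List.nodup_append'.mp hnd
      exact fun hgP => h'.2.2 hgP List.mem_cons_self
    have hlenP : P.length + 1 ≤ n + m := by
      simp only [List.length_append, List.length_cons] at hlen
      omega
    have h1 : SatInv n m (P ++ [g]) (sgdStep n m cl w g) :=
      inv_step n m cl hcl P g w hw hg hlenP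
    have h2 := ih (P ++ [g]) (sgdStep n m cl w g) (he ▸ hnd) (he ▸ hlen) h1
    rw [he] at h2
    simpa using h2

end Aux4
/-- In the SAT construction: for any `T ⊆ T₀`, any order of epoch 1 and all `1 ≤ γ ≤ m`:
if some clause gadget `clause(γ, i₁, i₂, i₃)` is in `T` then `w_{b_γ}^{(1)} = 0` and
`w_{c_γ}^{(1)} = 1/2 + 1/(200 N)`; otherwise `w_{b_γ}^{(1)} = -1` and
`w_{c_γ}^{(1)} = 1/2`. -/
theorem stmt13 (n m : ℕ) (cl : Fin m → Fin n × Fin n × Fin n)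
    (hcl : ClauseDistinct n m cl)
    (T : Finset (Gadget n m)) (os : ℕ → List (Gadget n m))
    (hos : ∀ e, 1 ≤ e → List.Perm (os e) T.toList)
    (γ : Fin m) :
    (Sum.inr γ ∈ T →
      runEpochs n m cl os 1 (bIdx n m γ) = 0 ∧
      runEpochs n m cl os 1 (cIdx n m γ) = 1 / 2 + 1 / (200 * (Nval n m : ℝ))) ∧
    (Sum.inr γ ∉ T →
      runEpochs n m cl os 1 (bIdx n m γ) = -1 ∧
      runEpochs n m cl os 1 (cIdx n m γ) = 1 / 2) := by
  have hperm := hos 1 le_rfl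
  have hnd : (os 1).Nodup := hperm.nodup_iff.mpr T.nodup_toList
  have hlen : (os 1).length ≤ n + m := by
    rw [hperm.length_eq, Finset.length_toList]
    calc T.card ≤ Fintype.card (Gadget n m) := T.card_le_univ
      _ = n + m := by simp
  have hInv := inv_fold n m cl hcl (os 1) [] (winit n m) (by simpa using hnd)
    (by simpa using hlen) (inv_init n m)
  simp only [List.nil_append] at hInv
  have hrun : runEpochs n m cl os 1 = (os 1).foldl (sgdStep n m cl) (winit n m) := by
    show runEpochs n m cl os (0 + 1) = _
    rw [runEpochs, runEpochs]
  have hmem : Sum.inr γ ∈ os 1 ↔ Sum.inr γ ∈ T := by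
    rw [hperm.mem_iff, Finset.mem_toList]
  obtain ⟨h1, h2, _, _⟩ := hInv
  constructor
  · intro hT
    obtain ⟨hc, hb⟩ := h1 γ (hmem.mpr hT)
    rw [hrun]
    exact ⟨hb, hc⟩
  · intro hT
    obtain ⟨hc, hb⟩ := h2 γ (fun h => hT (hmem.mp h))
    rw [hrun]
    exact ⟨hb, hc⟩
end

section
/- In the SAT construction: for any T ⊆ T₀, any orders of epochs 1 and 2, all 1 ≤ i ≤ n and 1 ≤ l ≤ |T|, let C_l be the number of clause gadgets among the first l samples processed in epoch 2; then w_{x_i}^{(2,l)} ∈ U(1, (C_l + 1/2)/(6N)) if var(i) ∈ T, and w_{x_i}^{(2,l)} ∈ U(−1, (C_l + 1/2)/(6N)) otherwise. -/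
open Classical

section SatAux

variable (n m : ℕ)

lemma hN1 : (1:ℝ) ≤ (Nval n m : ℝ) := by unfold Nval; push_cast; linarith
lemma hNm : 2*(m:ℝ) + 1 ≤ (Nval n m : ℝ) := by unfold Nval; push_cast; linarith
lemma hNpos : (0:ℝ) < (Nval n m : ℝ) := lt_of_lt_of_le one_pos (hN1 n m)

lemma abs_lb_pos {x c : ℝ} (h : c ≤ x) : c ≤ |x| := h.trans (le_abs_self x)
lemma abs_lb_neg {x c : ℝ} (h : x ≤ -c) : c ≤ |x| := by
  have := neg_le_abs x; linarith

lemma clauseX_eq (γ : Fin m) (i₁ i₂ i₃ : Fin n) (h12 : i₁ ≠ i₂) (h13 : i₁ ≠ i₃)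
    (h23 : i₂ ≠ i₃) :
    clauseX n m γ i₁ i₂ i₃ = fun j =>
      (if j = cIdx n m γ then (1:ℝ) else 0) +
      ((if j = xIdx n m i₁ then 1 else 0) + (if j = xIdx n m i₂ then 1 else 0) +
        (if j = xIdx n m i₃ then 1 else 0)) +
      (if j = bIdx n m γ then 1/2 else 0) := by
  funext j
  rcases j with ((γ'|i')|(γ'|u))
  · simp [clauseX, cIdx, xIdx, bIdx]
  · simp only [clauseX, cIdx, xIdx, bIdx]
    by_cases h1 : i' = i₁ <;> by_cases h2 : i' = i₂ <;> by_cases h3 : i' = i₃ <;>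
      simp_all
  · simp [clauseX, cIdx, xIdx, bIdx]
  · simp [clauseX, cIdx, xIdx, bIdx]

lemma dot_varX (w : SatIdx n m → ℝ) (i : Fin n) :
    dotN n m w (varX n m i) = 5 * w (xIdx n m i) := by
  rw [dotN]
  simp [varX, mul_ite, mul_zero, Finset.sum_ite_eq']
  ring

lemma dot_clauseX (w : SatIdx n m → ℝ) (γ : Fin m) (i₁ i₂ i₃ : Fin n)
    (h12 : i₁ ≠ i₂) (h13 : i₁ ≠ i₃) (h23 : i₂ ≠ i₃) :
    dotN n m w (clauseX n m γ i₁ i₂ i₃) =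
      w (cIdx n m γ) + (w (xIdx n m i₁) + w (xIdx n m i₂) + w (xIdx n m i₃)) +
        w (bIdx n m γ) / 2 := by
  rw [dotN, clauseX_eq n m γ i₁ i₂ i₃ h12 h13 h23]
  simp [mul_add, Finset.sum_add_distrib, mul_ite, mul_zero, mul_one,
    Finset.sum_ite_eq']
  ring

lemma varX_xIdx (i i' : Fin n) :
    varX n m i (xIdx n m i') = if i' = i then 5 else 0 := by
  simp [varX, xIdx]
lemma varX_cIdx (i : Fin n) (γ : Fin m) : varX n m i (cIdx n m γ) = 0 := by
  simp [varX, xIdx, cIdx]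
lemma varX_bIdx (i : Fin n) (γ : Fin m) : varX n m i (bIdx n m γ) = 0 := by
  simp [varX, xIdx, bIdx]

lemma clauseX_xIdx (γ : Fin m) (i₁ i₂ i₃ i : Fin n) :
    clauseX n m γ i₁ i₂ i₃ (xIdx n m i) = if i = i₁ ∨ i = i₂ ∨ i = i₃ then 1 else 0 := by
  simp [clauseX, cIdx, xIdx, bIdx]
lemma clauseX_cIdx (γ γ' : Fin m) (i₁ i₂ i₃ : Fin n) :
    clauseX n m γ i₁ i₂ i₃ (cIdx n m γ') = if γ' = γ then 1 else 0 := by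
  simp [clauseX, cIdx, xIdx, bIdx]
lemma clauseX_bIdx (γ γ' : Fin m) (i₁ i₂ i₃ : Fin n) :
    clauseX n m γ i₁ i₂ i₃ (bIdx n m γ') = if γ' = γ then 1/2 else 0 := by
  simp [clauseX, cIdx, xIdx, bIdx]

lemma gfun_big (s : ℝ) (h : |s - (-5)| < 0.01) :
    gfun n m s = -(12 * (Nval n m : ℝ) / 5) := by
  rw [gfun, if_pos h]

lemma gfun_small (s t : ℝ) (ht : t = 3 ∨ t = 1 ∨ t = -1 ∨ t = -3) (h : |s - t| ≤ 1/400) :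
    gfun n m s = -(1 / (1000 * (Nval n m : ℝ))) := by
  rw [abs_le] at h
  obtain ⟨h1, h2⟩ := h
  rcases ht with rfl | rfl | rfl | rfl
  · rw [gfun, if_neg (not_lt.2 (abs_lb_pos (by linarith))),
      if_neg (not_lt.2 (abs_lb_pos (by linarith))), if_pos]
    refine Or.inr (Or.inr (Or.inl ?_))
    rw [abs_lt]; constructor <;> linarith
  · rw [gfun, if_neg (not_lt.2 (abs_lb_pos (by linarith))),
      if_neg (not_lt.2 (abs_lb_pos (by linarith))), if_pos]
    refine Or.inl ?_
    rw [abs_lt]; constructor <;> linarith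
  · rw [gfun, if_neg (not_lt.2 (abs_lb_pos (by linarith))),
      if_neg (not_lt.2 (abs_lb_neg (by linarith))), if_pos]
    refine Or.inr (Or.inl ?_)
    rw [abs_lt]; constructor <;> linarith
  · rw [gfun, if_neg (not_lt.2 (abs_lb_pos (by linarith))),
      if_neg (not_lt.2 (abs_lb_neg (by linarith))), if_pos]
    refine Or.inr (Or.inr (Or.inr ?_))
    rw [abs_lt]; constructor <;> linarith

lemma gfun_range (s : ℝ) (h : -4.99 < s) :
    -1 ≤ gfun n m s ∧ gfun n m s ≤ 0 := by
  have hN := hN1 n m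
  rw [gfun]
  split_ifs with h1 h2 h3
  · rw [abs_lt] at h1; exfalso; linarith [h1.2]
  · norm_num
  · constructor
    · have : 1 / (1000 * (Nval n m : ℝ)) ≤ 1 := by
        rw [div_le_one (by linarith)]; linarith
      linarith
    · have : 0 ≤ 1 / (1000 * (Nval n m : ℝ)) := by positivity
      linarith
  · norm_num

lemma gfun_zero_of (s : ℝ) (hA : 0.01 ≤ |s - (-5)|) (hB : 0.26 ≤ |s - (-(1:ℝ)/2)|)
    (hC : 0.01 ≤ |s - 1|) (hD : 0.01 ≤ |s - (-1)|) (hE : 0.01 ≤ |s - 3|)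
    (hF : 0.01 ≤ |s - (-3)|) : gfun n m s = 0 := by
  rw [gfun, if_neg (not_lt.2 hA), if_neg (not_lt.2 hB), if_neg]
  push_neg
  exact ⟨hC, hD, hE, hF⟩

end SatAux
section SatInv

variable (n m : ℕ)

lemma eta_xIdx (i : Fin n) : eta n m (xIdx n m i) = 1/(6*(Nval n m : ℝ)) := rfl
lemma eta_cIdx (γ : Fin m) : eta n m (cIdx n m γ) = 5 := rfl
lemma eta_bIdx (γ : Fin m) : eta n m (bIdx n m γ) = 2000*(Nval n m : ℝ) := rfl

lemma abs_sub_le' (a b : ℝ) : |a - b| ≤ |a| + |b| := by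
  rw [sub_eq_add_neg]
  exact (abs_add_le a (-b)).trans (le_of_eq (by rw [abs_neg]))

lemma sgdStep_var (cl : Fin m → Fin n × Fin n × Fin n) (w : SatIdx n m → ℝ) (i : Fin n)
    (j : SatIdx n m) :
    sgdStep n m cl w (Sum.inl i) j =
      w j - eta n m j * gfun n m (5 * w (xIdx n m i)) * varX n m i j := by
  simp [sgdStep, gadgetSample, dot_varX]

lemma sgdStep_clause (cl : Fin m → Fin n × Fin n × Fin n) (hcl : ClauseDistinct n m cl)
    (w : SatIdx n m → ℝ) (γ : Fin m) (j : SatIdx n m) :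
    sgdStep n m cl w (Sum.inr γ) j =
      w j - eta n m j *
        gfun n m (w (cIdx n m γ) +
          (w (xIdx n m (cl γ).1) + w (xIdx n m (cl γ).2.1) + w (xIdx n m (cl γ).2.2)) +
          w (bIdx n m γ) / 2) *
        clauseX n m γ (cl γ).1 (cl γ).2.1 (cl γ).2.2 j := by
  obtain ⟨h12, h13, h23⟩ := hcl γ
  simp [sgdStep, gadgetSample, dot_clauseX n m w γ _ _ _ h12 h13 h23]

/-- number of clause gadgets in a finite set of gadgets -/
def CP (P : Finset (Gadget n m)) : ℕ := (P.filter (fun g => g.isRight)).card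

lemma CP_le (P : Finset (Gadget n m)) : CP n m P ≤ m := by
  have hsub : P.filter (fun g => g.isRight) ⊆
      Finset.univ.image (Sum.inr : Fin m → Gadget n m) := by
    intro g hg
    simp only [Finset.mem_filter] at hg
    rcases g with i | γ
    · simp at hg
    · simp
  calc CP n m P ≤ (Finset.univ.image (Sum.inr : Fin m → Gadget n m)).card :=
        Finset.card_le_card hsub
    _ ≤ (Finset.univ : Finset (Fin m)).card := Finset.card_image_le
    _ = m := by simp

lemma CP_insert_inl (P : Finset (Gadget n m)) (i : Fin n) :
    CP n m (insert (Sum.inl i) P) = CP n m P := by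
  unfold CP
  rw [Finset.filter_insert]
  simp

lemma CP_insert_inr (P : Finset (Gadget n m)) (γ : Fin m) (h : Sum.inr γ ∉ P) :
    CP n m (insert (Sum.inr γ) P) = CP n m P + 1 := by
  unfold CP
  rw [Finset.filter_insert]
  rw [if_pos (by simp)]
  rw [Finset.card_insert_of_notMem (fun hmem => h (Finset.mem_filter.1 hmem).1)]

lemma CP_toFinset (p : List (Gadget n m)) (h : p.Nodup) :
    CP n m p.toFinset = p.countP (fun g => g.isRight) := by
  unfold CP
  rw [← List.toFinset_filter, List.toFinset_card_of_nodup (h.filter _),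
    List.countP_eq_length_filter]

/-- epoch-1 invariant -/
def Inv1 (P : Finset (Gadget n m)) (w : SatIdx n m → ℝ) : Prop :=
  (∀ i : Fin n, |w (xIdx n m i) - (if Sum.inl i ∈ P then 1 else -1)| ≤
      (CP n m P : ℝ) / (6000 * (Nval n m : ℝ)^2)) ∧
  (∀ γ : Fin m, w (cIdx n m γ) =
      if Sum.inr γ ∈ P then 1/2 + 1/(200 * (Nval n m : ℝ)) else 1/2) ∧
  (∀ γ : Fin m, w (bIdx n m γ) = if Sum.inr γ ∈ P then 0 else -1)

/-- epoch-2 invariant -/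
def Inv2 (T P : Finset (Gadget n m)) (w : SatIdx n m → ℝ) : Prop :=
  (∀ i : Fin n, |w (xIdx n m i) - (if Sum.inl i ∈ T then 1 else -1)| <
      ((CP n m P : ℝ) + 1/2) / (6 * (Nval n m : ℝ))) ∧
  (∀ γ : Fin m, Sum.inr γ ∈ T → Sum.inr γ ∉ P →
      w (cIdx n m γ) = 1/2 + 1/(200 * (Nval n m : ℝ)) ∧ w (bIdx n m γ) = 0)

lemma inv1_drift_small (P : Finset (Gadget n m)) :
    (CP n m P : ℝ) / (6000 * (Nval n m : ℝ)^2) ≤ 1/2000 := by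
  have h1 := hN1 n m
  have h2 := hNm n m
  have hC : (CP n m P : ℝ) ≤ m := by exact_mod_cast CP_le n m P
  rw [div_le_iff₀ (by positivity)]
  nlinarith [sq_nonneg ((Nval n m : ℝ) - 1)]

end SatInv
section SatStep

variable (n m : ℕ)

lemma inv1_step (cl : Fin m → Fin n × Fin n × Fin n) (hcl : ClauseDistinct n m cl)
    (P : Finset (Gadget n m)) (w : SatIdx n m → ℝ) (g₀ : Gadget n m) (hg₀ : g₀ ∉ P)
    (hinv : Inv1 n m P w) : Inv1 n m (insert g₀ P) (sgdStep n m cl w g₀) := by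
  obtain ⟨hx, hc, hb⟩ := hinv
  have h1 := hN1 n m
  have h2 := hNm n m
  have hNp := hNpos n m
  have hN0 : (Nval n m : ℝ) ≠ 0 := ne_of_gt hNp
  have hdrift := inv1_drift_small n m P
  rcases g₀ with i | γ
  · -- var(i) step
    have hxi := hx i
    rw [if_neg hg₀] at hxi
    have hs : gfun n m (5 * w (xIdx n m i)) = -(12 * (Nval n m : ℝ) / 5) := by
      apply gfun_big
      have he : (5 : ℝ) * w (xIdx n m i) - (-5) = 5 * (w (xIdx n m i) - (-1)) := by ring
      rw [he, abs_mul, abs_of_nonneg (by norm_num : (0:ℝ) ≤ 5)]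
      have := le_trans hxi hdrift
      linarith
    refine ⟨?_, ?_, ?_⟩
    · intro i'
      rw [CP_insert_inl]
      by_cases hii : i' = i
      · subst hii
        have hw' : sgdStep n m cl w (Sum.inl i') (xIdx n m i') = w (xIdx n m i') + 2 := by
          rw [sgdStep_var, hs, varX_xIdx, if_pos rfl, eta_xIdx]
          field_simp
          ring
        rw [hw', if_pos (Finset.mem_insert_self _ _)]
        have he : w (xIdx n m i') + 2 - 1 = w (xIdx n m i') - (-1) := by ring
        rw [he]
        exact hxi
      · have hw' : sgdStep n m cl w (Sum.inl i) (xIdx n m i') = w (xIdx n m i') := by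
          rw [sgdStep_var, varX_xIdx, if_neg hii, mul_zero, sub_zero]
        rw [hw']
        simp only [Finset.mem_insert, Sum.inl.injEq, hii, false_or]
        exact hx i'
    · intro γ'
      have hw' : sgdStep n m cl w (Sum.inl i) (cIdx n m γ') = w (cIdx n m γ') := by
        rw [sgdStep_var, varX_cIdx, mul_zero, sub_zero]
      rw [hw']
      simp only [Finset.mem_insert, reduceCtorEq, false_or]
      exact hc γ'
    · intro γ'
      have hw' : sgdStep n m cl w (Sum.inl i) (bIdx n m γ') = w (bIdx n m γ') := by
        rw [sgdStep_var, varX_bIdx, mul_zero, sub_zero]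
      rw [hw']
      simp only [Finset.mem_insert, reduceCtorEq, false_or]
      exact hb γ'
  · -- clause(γ) step
    obtain ⟨h12, h13, h23⟩ := hcl γ
    have hcγ : w (cIdx n m γ) = 1/2 := by rw [hc γ, if_neg hg₀]
    have hbγ : w (bIdx n m γ) = -1 := by rw [hb γ, if_neg hg₀]
    set i₁ := (cl γ).1
    set i₂ := (cl γ).2.1
    set i₃ := (cl γ).2.2
    set t₁ := (if Sum.inl i₁ ∈ P then (1:ℝ) else -1) with ht₁
    set t₂ := (if Sum.inl i₂ ∈ P then (1:ℝ) else -1) with ht₂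
    set t₃ := (if Sum.inl i₃ ∈ P then (1:ℝ) else -1) with ht₃
    set s := w (cIdx n m γ) +
        (w (xIdx n m i₁) + w (xIdx n m i₂) + w (xIdx n m i₃)) + w (bIdx n m γ) / 2
      with hsdef
    have htsum : t₁ + t₂ + t₃ = 3 ∨ t₁ + t₂ + t₃ = 1 ∨ t₁ + t₂ + t₃ = -1 ∨
        t₁ + t₂ + t₃ = -3 := by
      rw [ht₁, ht₂, ht₃]
      split_ifs <;> norm_num
    have hd1 := le_trans (hx i₁) hdrift
    have hd2 := le_trans (hx i₂) hdrift
    have hd3 := le_trans (hx i₃) hdrift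
    rw [← ht₁] at hd1
    rw [← ht₂] at hd2
    rw [← ht₃] at hd3
    have hnear : |s - (t₁ + t₂ + t₃)| ≤ 1/400 := by
      have he : s - (t₁ + t₂ + t₃) =
          (w (xIdx n m i₁) - t₁) + (w (xIdx n m i₂) - t₂) + (w (xIdx n m i₃) - t₃) := by
        rw [hsdef, hcγ, hbγ]; ring
      rw [he]
      calc |(w (xIdx n m i₁) - t₁) + (w (xIdx n m i₂) - t₂) + (w (xIdx n m i₃) - t₃)|
          ≤ |(w (xIdx n m i₁) - t₁) + (w (xIdx n m i₂) - t₂)| + |w (xIdx n m i₃) - t₃| :=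
            abs_add_le _ _
        _ ≤ |w (xIdx n m i₁) - t₁| + |w (xIdx n m i₂) - t₂| + |w (xIdx n m i₃) - t₃| := by
            linarith [abs_add_le (w (xIdx n m i₁) - t₁) (w (xIdx n m i₂) - t₂)]
        _ ≤ 1/400 := by linarith [hd1, hd2, hd3]
    have hg : gfun n m s = -(1 / (1000 * (Nval n m : ℝ))) :=
      gfun_small n m s (t₁ + t₂ + t₃) htsum hnear
    have hCP := CP_insert_inr n m P γ hg₀
    refine ⟨?_, ?_, ?_⟩
    · intro i'
      rw [CP_insert_inr n m P γ hg₀]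
      simp only [Finset.mem_insert, reduceCtorEq, false_or]
      have hDpos : (0:ℝ) < 6000 * (Nval n m : ℝ)^2 := by positivity
      by_cases hin : i' = i₁ ∨ i' = i₂ ∨ i' = i₃
      · have hw' : sgdStep n m cl w (Sum.inr γ) (xIdx n m i') =
            w (xIdx n m i') + 1 / (6000 * (Nval n m : ℝ)^2) := by
          rw [sgdStep_clause n m cl hcl, clauseX_xIdx, if_pos hin, eta_xIdx, ← hsdef, hg]
          field_simp
          ring
        rw [hw']
        have he : w (xIdx n m i') + 1 / (6000 * (Nval n m : ℝ)^2) -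
            (if Sum.inl i' ∈ P then (1:ℝ) else -1) =
            (w (xIdx n m i') - (if Sum.inl i' ∈ P then (1:ℝ) else -1)) +
              1 / (6000 * (Nval n m : ℝ)^2) := by ring
        rw [he]
        calc |(w (xIdx n m i') - (if Sum.inl i' ∈ P then (1:ℝ) else -1)) +
              1 / (6000 * (Nval n m : ℝ)^2)|
            ≤ |w (xIdx n m i') - (if Sum.inl i' ∈ P then (1:ℝ) else -1)| +
              |1 / (6000 * (Nval n m : ℝ)^2)| := abs_add_le _ _
          _ ≤ (CP n m P : ℝ) / (6000 * (Nval n m : ℝ)^2) +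
              1 / (6000 * (Nval n m : ℝ)^2) := by
              have := hx i'
              rw [abs_of_nonneg (by positivity : (0:ℝ) ≤ 1 / (6000 * (Nval n m : ℝ)^2))]
              linarith
          _ = ((CP n m P : ℝ) + 1) / (6000 * (Nval n m : ℝ)^2) := by ring
          _ = ((CP n m P + 1 : ℕ) : ℝ) / (6000 * (Nval n m : ℝ)^2) := by push_cast; ring
      · have hw' : sgdStep n m cl w (Sum.inr γ) (xIdx n m i') = w (xIdx n m i') := by
          rw [sgdStep_clause n m cl hcl, clauseX_xIdx, if_neg hin, mul_zero, sub_zero]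
        rw [hw']
        refine le_trans (hx i') ?_
        gcongr
        · push_cast; linarith
    · intro γ'
      by_cases hγγ : γ' = γ
      · subst hγγ
        have hw' : sgdStep n m cl w (Sum.inr γ') (cIdx n m γ') =
            1/2 + 1/(200 * (Nval n m : ℝ)) := by
          rw [sgdStep_clause n m cl hcl, clauseX_cIdx, if_pos rfl, eta_cIdx, ← hsdef, hg,
            hcγ]
          field_simp
          ring
        rw [hw', if_pos (Finset.mem_insert_self _ _)]
      · have hw' : sgdStep n m cl w (Sum.inr γ) (cIdx n m γ') = w (cIdx n m γ') := by
          rw [sgdStep_clause n m cl hcl, clauseX_cIdx, if_neg hγγ, mul_zero, sub_zero]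
        rw [hw']
        simp only [Finset.mem_insert, Sum.inr.injEq, hγγ, false_or]
        exact hc γ'
    · intro γ'
      by_cases hγγ : γ' = γ
      · subst hγγ
        have hw' : sgdStep n m cl w (Sum.inr γ') (bIdx n m γ') = 0 := by
          rw [sgdStep_clause n m cl hcl, clauseX_bIdx, if_pos rfl, eta_bIdx, ← hsdef, hg,
            hbγ]
          field_simp
          ring
        rw [hw', if_pos (Finset.mem_insert_self _ _)]
      · have hw' : sgdStep n m cl w (Sum.inr γ) (bIdx n m γ') = w (bIdx n m γ') := by
          rw [sgdStep_clause n m cl hcl, clauseX_bIdx, if_neg hγγ, mul_zero, sub_zero]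
        rw [hw']
        simp only [Finset.mem_insert, Sum.inr.injEq, hγγ, false_or]
        exact hb γ'

end SatStep
section SatStep2

variable (n m : ℕ)

lemma inv2_B_le (P : Finset (Gadget n m)) :
    ((CP n m P : ℝ) + 1/2) / (6 * (Nval n m : ℝ)) ≤ 1/12 := by
  have h2 := hNm n m
  have hC : (CP n m P : ℝ) ≤ m := by exact_mod_cast CP_le n m P
  rw [div_le_iff₀ (by linarith [hNpos n m])]
  linarith

lemma inv2_step (cl : Fin m → Fin n × Fin n × Fin n) (hcl : ClauseDistinct n m cl)
    (T P : Finset (Gadget n m)) (w : SatIdx n m → ℝ) (g₀ : Gadget n m)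
    (hg₀T : g₀ ∈ T) (hg₀P : g₀ ∉ P) (hinv : Inv2 n m T P w) :
    Inv2 n m T (insert g₀ P) (sgdStep n m cl w g₀) := by
  obtain ⟨hx, hcb⟩ := hinv
  have h1 := hN1 n m
  have h2 := hNm n m
  have hNp := hNpos n m
  have hN0 : (Nval n m : ℝ) ≠ 0 := ne_of_gt hNp
  have hB := inv2_B_le n m P
  rcases g₀ with i | γ
  · -- var(i) step in epoch 2
    have hxi := hx i
    rw [if_pos hg₀T] at hxi
    have hxi' : |w (xIdx n m i) - 1| < 1/12 := lt_of_lt_of_le hxi hB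
    rw [abs_lt] at hxi'
    have hs : gfun n m (5 * w (xIdx n m i)) = 0 := by
      apply gfun_zero_of
      · exact abs_lb_pos (by linarith [hxi'.1])
      · exact abs_lb_pos (by linarith [hxi'.1])
      · exact abs_lb_pos (by linarith [hxi'.1])
      · exact abs_lb_pos (by linarith [hxi'.1])
      · exact abs_lb_pos (by linarith [hxi'.1])
      · exact abs_lb_pos (by linarith [hxi'.1])
    have hw' : sgdStep n m cl w (Sum.inl i) = w := by
      funext j
      rw [sgdStep_var, hs]
      ring
    rw [hw']
    constructor
    · intro i'
      refine lt_of_lt_of_le (hx i') ?_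
      rw [CP_insert_inl]
    · intro γ' hT' hP'
      exact hcb γ' hT' (fun h => hP' (Finset.mem_insert_of_mem h))
  · -- clause(γ) step in epoch 2
    obtain ⟨h12, h13, h23⟩ := hcl γ
    obtain ⟨hcγ, hbγ⟩ := hcb γ hg₀T hg₀P
    set i₁ := (cl γ).1
    set i₂ := (cl γ).2.1
    set i₃ := (cl γ).2.2
    set s := w (cIdx n m γ) +
        (w (xIdx n m i₁) + w (xIdx n m i₂) + w (xIdx n m i₃)) + w (bIdx n m γ) / 2
      with hsdef
    have hlow : ∀ i' : Fin n, -(13/12 : ℝ) < w (xIdx n m i') := by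
      intro i'
      have h := lt_of_lt_of_le (hx i') hB
      rw [abs_lt] at h
      split_ifs at h <;> linarith [h.1]
    have hinvN : (0:ℝ) < ((Nval n m : ℝ))⁻¹ := inv_pos.2 hNp
    have hsbig : (-4.99 : ℝ) < s := by
      rw [hsdef, hcγ, hbγ]
      have a1 := hlow i₁
      have a2 := hlow i₂
      have a3 := hlow i₃
      norm_num
      linarith [hinvN]
    obtain ⟨hg1, hg2⟩ := gfun_range n m s hsbig
    have hgabs : |gfun n m s| ≤ 1 := abs_le.2 ⟨hg1, hg2.trans zero_le_one⟩
    constructor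
    · intro i'
      rw [CP_insert_inr n m P γ hg₀P]
      have hBnew : ((CP n m P : ℝ) + 1/2) / (6 * (Nval n m : ℝ)) +
          1 / (6 * (Nval n m : ℝ)) =
          (((CP n m P + 1 : ℕ) : ℝ) + 1/2) / (6 * (Nval n m : ℝ)) := by
        push_cast
        ring
      by_cases hin : i' = i₁ ∨ i' = i₂ ∨ i' = i₃
      · have hw' : sgdStep n m cl w (Sum.inr γ) (xIdx n m i') =
            w (xIdx n m i') - 1/(6 * (Nval n m : ℝ)) * gfun n m s := by
          rw [sgdStep_clause n m cl hcl, clauseX_xIdx, if_pos hin, eta_xIdx, ← hsdef]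
          ring
        rw [hw']
        have he : w (xIdx n m i') - 1/(6 * (Nval n m : ℝ)) * gfun n m s -
            (if Sum.inl i' ∈ T then (1:ℝ) else -1) =
            (w (xIdx n m i') - (if Sum.inl i' ∈ T then (1:ℝ) else -1)) -
              1/(6 * (Nval n m : ℝ)) * gfun n m s := by ring
        rw [he]
        have habs : |(w (xIdx n m i') - (if Sum.inl i' ∈ T then (1:ℝ) else -1)) -
            1/(6 * (Nval n m : ℝ)) * gfun n m s| ≤
            |w (xIdx n m i') - (if Sum.inl i' ∈ T then (1:ℝ) else -1)| +
            |1/(6 * (Nval n m : ℝ)) * gfun n m s| := abs_sub_le' _ _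
        have hu : |1/(6 * (Nval n m : ℝ)) * gfun n m s| ≤ 1/(6 * (Nval n m : ℝ)) := by
          rw [abs_mul, abs_of_nonneg (by positivity : (0:ℝ) ≤ 1/(6 * (Nval n m : ℝ)))]
          nlinarith [hgabs, (by positivity : (0:ℝ) < 1/(6 * (Nval n m : ℝ)))]
        rw [← hBnew]
        have := hx i'
        linarith
      · have hw' : sgdStep n m cl w (Sum.inr γ) (xIdx n m i') = w (xIdx n m i') := by
          rw [sgdStep_clause n m cl hcl, clauseX_xIdx, if_neg hin, mul_zero, sub_zero]
        rw [hw']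
        refine lt_of_lt_of_le (hx i') ?_
        gcongr
        push_cast
        linarith
    · intro γ' hT' hP'
      have hne : γ' ≠ γ := fun h => hP' (h ▸ Finset.mem_insert_self _ _)
      have hPold : Sum.inr γ' ∉ P := fun h => hP' (Finset.mem_insert_of_mem h)
      have hwc : sgdStep n m cl w (Sum.inr γ) (cIdx n m γ') = w (cIdx n m γ') := by
        rw [sgdStep_clause n m cl hcl, clauseX_cIdx, if_neg hne, mul_zero, sub_zero]
      have hwb : sgdStep n m cl w (Sum.inr γ) (bIdx n m γ') = w (bIdx n m γ') := by
        rw [sgdStep_clause n m cl hcl, clauseX_bIdx, if_neg hne, mul_zero, sub_zero]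
      rw [hwc, hwb]
      exact hcb γ' hT' hPold

lemma inv1_fold (cl : Fin m → Fin n × Fin n × Fin n) (hcl : ClauseDistinct n m cl)
    (L : List (Gadget n m)) :
    ∀ (P : Finset (Gadget n m)) (w : SatIdx n m → ℝ), L.Nodup → (∀ g ∈ L, g ∉ P) →
      Inv1 n m P w → Inv1 n m (P ∪ L.toFinset) (L.foldl (sgdStep n m cl) w) := by
  induction L with
  | nil => intro P w _ _ h; simpa using h
  | cons g L ih =>
    intro P w hnd hdisj hinv
    rw [List.foldl_cons, List.toFinset_cons, Finset.union_insert, ← Finset.insert_union]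
    refine ih (insert g P) _ (List.nodup_cons.1 hnd).2 ?_
      (inv1_step n m cl hcl P w g (hdisj g List.mem_cons_self) hinv)
    intro g' hg'
    simp only [Finset.mem_insert, not_or]
    exact ⟨fun he => (List.nodup_cons.1 hnd).1 (he ▸ hg'),
      hdisj g' (List.mem_cons_of_mem _ hg')⟩

lemma inv2_fold (cl : Fin m → Fin n × Fin n × Fin n) (hcl : ClauseDistinct n m cl)
    (T : Finset (Gadget n m)) (L : List (Gadget n m)) :
    ∀ (P : Finset (Gadget n m)) (w : SatIdx n m → ℝ), L.Nodup →
      (∀ g ∈ L, g ∈ T ∧ g ∉ P) →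
      Inv2 n m T P w → Inv2 n m T (P ∪ L.toFinset) (L.foldl (sgdStep n m cl) w) := by
  induction L with
  | nil => intro P w _ _ h; simpa using h
  | cons g L ih =>
    intro P w hnd hdisj hinv
    rw [List.foldl_cons, List.toFinset_cons, Finset.union_insert, ← Finset.insert_union]
    refine ih (insert g P) _ (List.nodup_cons.1 hnd).2 ?_
      (inv2_step n m cl hcl T P w g (hdisj g List.mem_cons_self).1
        (hdisj g List.mem_cons_self).2 hinv)
    intro g' hg'
    refine ⟨(hdisj g' (List.mem_cons_of_mem _ hg')).1, ?_⟩
    simp only [Finset.mem_insert, not_or]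
    exact ⟨fun he => (List.nodup_cons.1 hnd).1 (he ▸ hg'),
      (hdisj g' (List.mem_cons_of_mem _ hg')).2⟩

lemma inv1_init : Inv1 n m ∅ (winit n m) := by
  refine ⟨?_, ?_, ?_⟩
  · intro i
    simp [winit, xIdx, CP]
  · intro γ
    simp [winit, cIdx]
  · intro γ
    simp [winit, bIdx]

lemma inv1_to_inv2 (T : Finset (Gadget n m)) (w : SatIdx n m → ℝ)
    (h : Inv1 n m T w) : Inv2 n m T ∅ w := by
  obtain ⟨hx, hc, hb⟩ := h
  have h1 := hN1 n m
  have h2 := hNm n m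
  have hC : (CP n m T : ℝ) ≤ m := by exact_mod_cast CP_le n m T
  constructor
  · intro i
    refine lt_of_le_of_lt (hx i) ?_
    have hCP0 : CP n m (∅ : Finset (Gadget n m)) = 0 := by simp [CP]
    rw [hCP0]
    push_cast
    rw [div_lt_div_iff₀ (by positivity) (by positivity)]
    nlinarith
  · intro γ hT _
    exact ⟨by rw [hc γ, if_pos hT], by rw [hb γ, if_pos hT]⟩

end SatStep2


/-- In the SAT construction: for any `T ⊆ T₀`, any orders of epochs 1 and 2, all
`1 ≤ i ≤ n` and `1 ≤ l ≤ |T|`, with `C_l` the number of clause gadgets among the first `l`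
samples processed in epoch 2: `w_{x_i}^{(2,l)} ∈ U(1, (C_l + 1/2)/(6N))` if `var(i) ∈ T`,
and `w_{x_i}^{(2,l)} ∈ U(-1, (C_l + 1/2)/(6N))` otherwise. -/
theorem stmt14 (n m : ℕ) (cl : Fin m → Fin n × Fin n × Fin n)
    (hcl : ClauseDistinct n m cl)
    (T : Finset (Gadget n m)) (os : ℕ → List (Gadget n m))
    (hos : ∀ e, 1 ≤ e → List.Perm (os e) T.toList)
    (i : Fin n) (l : ℕ) (hl1 : 1 ≤ l) (hl : l ≤ T.card) :
    (Sum.inl i ∈ T →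
      |(((os 2).take l).foldl (sgdStep n m cl) (runEpochs n m cl os 1)) (xIdx n m i) - 1|
        < (((((os 2).take l).countP (fun gd => gd.isRight)) : ℝ) + 1 / 2)
            / (6 * (Nval n m : ℝ))) ∧
    (Sum.inl i ∉ T →
      |(((os 2).take l).foldl (sgdStep n m cl) (runEpochs n m cl os 1)) (xIdx n m i)
          - (-1)|
        < (((((os 2).take l).countP (fun gd => gd.isRight)) : ℝ) + 1 / 2)
            / (6 * (Nval n m : ℝ))) := by
  have hos1 := hos 1 le_rfl
  have hos2 := hos 2 (by norm_num)
  have hndT : T.toList.Nodup := T.nodup_toList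
  have hnd1 : (os 1).Nodup := hos1.nodup_iff.2 hndT
  have htf1 : (os 1).toFinset = T := by
    ext a
    rw [List.mem_toFinset, hos1.mem_iff, Finset.mem_toList]
  have hw1 : runEpochs n m cl os 1 = (os 1).foldl (sgdStep n m cl) (winit n m) := rfl
  have hInv1T : Inv1 n m T (runEpochs n m cl os 1) := by
    have h := inv1_fold n m cl hcl (os 1) ∅ (winit n m) hnd1 (by simp) (inv1_init n m)
    rwa [htf1, Finset.empty_union, ← hw1] at h
  have hInv2₀ : Inv2 n m T ∅ (runEpochs n m cl os 1) :=
    inv1_to_inv2 n m T _ hInv1T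
  have hndp : ((os 2).take l).Nodup :=
    ((os 2).take_sublist l).nodup (hos2.nodup_iff.2 hndT)
  have hmemp : ∀ g ∈ (os 2).take l, g ∈ T ∧ g ∉ (∅ : Finset (Gadget n m)) := by
    intro g hg
    refine ⟨?_, by simp⟩
    have hg2 : g ∈ os 2 := List.take_subset l (os 2) hg
    have := hos2.mem_iff.1 hg2
    exact Finset.mem_toList.1 this
  have hInv2 := inv2_fold n m cl hcl T ((os 2).take l) ∅ _ hndp hmemp hInv2₀
  rw [Finset.empty_union] at hInv2
  have hx := hInv2.1 i
  rw [CP_toFinset n m _ hndp] at hx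
  constructor
  · intro hiT
    rw [if_pos hiT] at hx
    exact hx
  · intro hiT
    rw [if_neg hiT] at hx
    exact hx
end
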